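/- Let G = AB be a finite group factorized by subgroups A and B of coprime orders, and suppose the soluble radical of G is trivial, so that F*(G) = S_1 × ... × S_m is a direct product of nonabelian simple subgroups S_i which G permutes by conjugation; write S_iA = S_i ∩ A and S_iB = S_i ∩ B. If S_iA is not a p-group for any prime p, then S_i is normalized by F*(A); similarly, if S_iB is not a p-group for any prime p, then S_i is normalized by F*(B). -/

import Mathlib

open Subgroup

/-- The conjugate of a subgroup: `S ^ g = { g s g⁻¹ }`. -/
def conjSubgroup {G : Type*} [Group G] (g : G) (S : Subgroup G) : Subgroup G :=
  S.map (MulAut.conj g).toMonoidHom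

/-- A subgroup is subnormal if it can be joined to the whole group by a chain
of successive normal inclusions. -/
def Subgroup.IsSubnormal' {G : Type*} [Group G] (H : Subgroup G) : Prop :=
  ∃ (n : ℕ) (c : Fin (n + 1) → Subgroup G), c 0 = H ∧ c (Fin.last n) = ⊤ ∧
    ∀ i : Fin n, c i.castSucc ≤ c i.succ ∧
      ∀ x ∈ c i.succ, ∀ h ∈ c i.castSucc, x * h * x⁻¹ ∈ c i.castSucc

/-- A group is quasisimple if it is perfect and its central quotient is a
nonabelian simple group. -/
def IsQuasisimple (Q : Type*) [Group Q] : Prop :=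
  commutator Q = ⊤ ∧ IsSimpleGroup (Q ⧸ Subgroup.center Q) ∧
    ∃ a b : Q ⧸ Subgroup.center Q, a * b ≠ b * a

/-- The Fitting subgroup: the product (join) of all nilpotent normal subgroups. -/
def fittingSubgroup (G : Type*) [Group G] : Subgroup G :=
  sSup {H : Subgroup G | H.Normal ∧ Group.IsNilpotent H}

/-- The generalized Fitting subgroup `F*(G)`: the product of the Fitting subgroup
and all subnormal quasisimple subgroups. -/
def generalizedFitting (G : Type*) [Group G] : Subgroup G :=
  fittingSubgroup G ⊔ sSup {Q : Subgroup G | Q.IsSubnormal' ∧ IsQuasisimple Q}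

open scoped Classical in
/-- The generalized Fitting series, `F*_0(G) = 1` and `F*_{i+1}(G)` the preimage
of `F*(G / F*_i(G))`. (The terms of the series are indeed normal, so the `⊤`
default branch is never taken.) -/
noncomputable def generalizedFittingSeries (G : Type*) [Group G] : ℕ → Subgroup G
  | 0 => ⊥
  | n + 1 =>
    if h : (generalizedFittingSeries G n).Normal then
      letI := h
      (generalizedFitting (G ⧸ generalizedFittingSeries G n)).comap
        (QuotientGroup.mk' (generalizedFittingSeries G n))
    else ⊤

/-- The generalized Fitting height `h*(G)`: the least `h` with `F*_h(G) = G`. -/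
noncomputable def generalizedFittingHeight (G : Type*) [Group G] : ℕ :=
  sInf {h : ℕ | generalizedFittingSeries G h = ⊤}

open scoped Classical in
/-- The Fitting series. -/
noncomputable def fittingSeries (G : Type*) [Group G] : ℕ → Subgroup G
  | 0 => ⊥
  | n + 1 =>
    if h : (fittingSeries G n).Normal then
      letI := h
      (fittingSubgroup (G ⧸ fittingSeries G n)).comap
        (QuotientGroup.mk' (fittingSeries G n))
    else ⊤

/-- The Fitting height. -/
noncomputable def fittingHeight (G : Type*) [Group G] : ℕ :=
  sInf {h : ℕ | fittingSeries G h = ⊤}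

/-- The derived length: the least `n` with `G^{(n)} = 1`. -/
noncomputable def derivedLength (G : Type*) [Group G] : ℕ :=
  sInf {n : ℕ | derivedSeries G n = ⊥}

/-- The soluble radical: the product (join) of all soluble normal subgroups. -/
def solubleRadical (G : Type*) [Group G] : Subgroup G :=
  sSup {H : Subgroup G | H.Normal ∧ IsSolvable H}

/-- A group is an (internal) direct product of nonabelian simple groups. -/
def IsProdOfNonabelianSimples (Q : Type*) [Group Q] : Prop :=
  ∃ (m : ℕ) (S : Fin m → Subgroup Q),
    (∀ i, (S i).Normal) ∧ (∀ i, IsSimpleGroup (S i)) ∧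
    (∀ i, ∃ a b : S i, a * b ≠ b * a) ∧
    iSupIndep S ∧ iSup S = ⊤

/-- The section `M/N` (for `N ≤ M` with `N.subgroupOf M` normal) is soluble. -/
def SectionIsSolvable {G : Type*} [Group G] (N M : Subgroup G) : Prop :=
  N ≤ M ∧ ∃ _h : (N.subgroupOf M).Normal, IsSolvable (M ⧸ N.subgroupOf M)

/-- The section `M/N` is a direct product of nonabelian simple groups. -/
def SectionIsProdOfNonabelianSimples {G : Type*} [Group G] (N M : Subgroup G) : Prop :=
  N ≤ M ∧ ∃ _h : (N.subgroupOf M).Normal,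
    IsProdOfNonabelianSimples (M ⧸ N.subgroupOf M)

/-- The nonsoluble length `λ(G)`: the least number of nonsoluble factors in a
normal series each of whose factors either is soluble or is a direct product of
nonabelian simple groups. -/
noncomputable def nonsolubleLength (G : Type*) [Group G] : ℕ :=
  sInf {n : ℕ | ∃ (k : ℕ) (N : Fin (k + 1) → Subgroup G), Monotone N ∧
    N 0 = ⊥ ∧ N (Fin.last k) = ⊤ ∧ (∀ i, (N i).Normal) ∧
    (∀ i : Fin k, SectionIsSolvable (N i.castSucc) (N i.succ) ∨
      SectionIsProdOfNonabelianSimples (N i.castSucc) (N i.succ)) ∧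
    n = Nat.card {i : Fin k // ¬ SectionIsSolvable (N i.castSucc) (N i.succ)}}

/-!
`F*(A)` is generated by nilpotent normal and subnormal quasisimple subgroups of `A`, so it
suffices that each of them normalizes `S i`.

For a nilpotent normal subgroup `N` of `A`, it suffices to treat a `p`-element `x` of `N`,
which lies in the Sylow `p`-subgroup `P` of `N`, characteristic in `N` and hence normalized
by `A`. If `x` moved `S i` to `S j ≠ S i`, pick `a ∈ S i ∩ A`, `a ≠ 1`, of order prime to `p`:
the commutator `⁅x, a⁆ = (x a x⁻¹) a⁻¹` lies in `P`, but `x a x⁻¹ ∈ S j` commutes with `a`,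
so its order divides that of `a`. Hence `x` commutes with `a`, and `a ∈ S i ⊓ S j = ⊥`.

For a subnormal quasisimple subgroup `Q` of `A`, Wielandt's lemma says that `Q` lies in or
centralizes every normal subgroup `N` of `A`: if `Q` is subnormal in `M ⊴ A`, by induction `Q`
centralizes `N ⊓ M ⊇ ⁅Q, N⁆`, and the three subgroups lemma together with `Q = ⁅Q, Q⁆` gives
`⁅Q, N⁆ = ⊥`. Apply it to `N = A ⊓ ⨆ j, S j`, which normalizes every `S i`; if instead `Q`
centralizes `N`, it fixes a nontrivial element of `S i`, which again prevents `Q` from moving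
`S i`.
-/

section

variable {G : Type*} [Group G]

theorem IsQuasisimple.eq_top_or_le_center {Q : Type*} [Group Q] (hQ : IsQuasisimple Q)
    (K : Subgroup Q) [K.Normal] : K = ⊤ ∨ K ≤ center Q := by
  obtain ⟨hperf, hsimple, -⟩ := hQ
  have hK : (K.map (QuotientGroup.mk' (center Q))).Normal :=
    Normal.map inferInstance _ (QuotientGroup.mk'_surjective _)
  rcases hK.eq_bot_or_eq_top with h | h
  · right
    rwa [Subgroup.map_eq_bot_iff, QuotientGroup.ker_mk'] at h
  · left
    have hsup : K ⊔ center Q = ⊤ := by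
      rw [← QuotientGroup.ker_mk' (center Q), ← comap_map_eq, h, comap_top]
    rw [eq_top_iff, ← hperf]
    exact Normal.commutator_le_of_self_sup_commutative_eq_top hsup inferInstance

theorem IsQuasisimple.commutator_self {Q : Subgroup G} (hQ : IsQuasisimple Q) : ⁅Q, Q⁆ = Q := by
  rw [← Q.map_subtype_commutator, hQ.1, ← MonoidHom.range_eq_map, Q.range_subtype]

theorem IsQuasisimple.le_or_commutator_eq_bot {Q N : Subgroup G} (hQ : IsQuasisimple Q)
    (hNQ : N ≤ Q) (hQN : Q ≤ normalizer N) : Q ≤ N ∨ ⁅Q, N⁆ = ⊥ := by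
  have : (N.subgroupOf Q).Normal := (normal_subgroupOf_iff_le_normalizer hNQ).2 hQN
  refine (hQ.eq_top_or_le_center (N.subgroupOf Q)).imp subgroupOf_eq_top.1 fun h => ?_
  rw [commutator_eq_bot_iff_le_centralizer]
  intro x hx n hn
  exact (congrArg Subtype.val
    (mem_center_iff.1 (h (show ⟨n, hNQ hn⟩ ∈ N.subgroupOf Q from hn)) ⟨x, hx⟩)).symm

namespace Subgroup

/-- Subnormality of `Q` in `H`, with the chain built from the top down, which is the direction
in which Wielandt's argument inducts. -/
inductive IsSubnormalIn (Q : Subgroup G) : Subgroup G → Prop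
  | refl : IsSubnormalIn Q Q
  | step {M H : Subgroup G} : IsSubnormalIn Q M → M ≤ H → H ≤ normalizer M → IsSubnormalIn Q H

theorem IsSubnormalIn.le {Q H : Subgroup G} (h : IsSubnormalIn Q H) : Q ≤ H := by
  induction h with
  | refl => exact le_rfl
  | step _ hMH _ ih => exact ih.trans hMH

theorem IsSubnormal'.isSubnormalIn_top {Q : Subgroup G} (h : Q.IsSubnormal') :
    IsSubnormalIn Q ⊤ := by
  obtain ⟨n, c, hc0, hcn, hc⟩ := h
  suffices ∀ k, IsSubnormalIn Q (c k) from hcn ▸ this (Fin.last n)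
  intro k
  induction k using Fin.induction with
  | zero => exact hc0 ▸ .refl
  | succ i ih => exact ih.step (hc i).1 (le_normalizer_iff.2 (hc i).2)

theorem IsSubnormalIn.le_or_commutator_eq_bot {Q H : Subgroup G} (hQH : IsSubnormalIn Q H)
    (hQ : IsQuasisimple Q) {N : Subgroup G} (hNH : N ≤ H) (hHN : H ≤ normalizer N) :
    Q ≤ N ∨ ⁅Q, N⁆ = ⊥ := by
  induction hQH generalizing N with
  | refl => exact hQ.le_or_commutator_eq_bot hNH hHN
  | @step M H hQM hMH hHM ih =>
    have hMNM : M ≤ normalizer (N ⊓ M : Subgroup G) :=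
      le_normalizer_iff_commutator_le_right.2 <| le_inf
        ((commutator_mono le_rfl inf_le_left).trans
          (le_normalizer_iff_commutator_le_right.1 (hMH.trans hHN)))
        ((commutator_mono le_rfl inf_le_right).trans M.commutator_le_self)
    refine (ih inf_le_right hMNM).imp (fun h => h.trans inf_le_left) fun h => ?_
    have hQN : ⁅Q, N⁆ ≤ N ⊓ M := le_inf
      ((commutator_mono (hQM.le.trans hMH) le_rfl).trans
        (le_normalizer_iff_commutator_le_right.1 hHN))
      ((commutator_mono hQM.le le_rfl).trans
        (le_normalizer_iff_commutator_le_left.1 (hNH.trans hHM)))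
    have h₁ : ⁅⁅Q, N⁆, Q⁆ = ⊥ :=
      eq_bot_iff.2 ((commutator_mono hQN le_rfl).trans (by rw [commutator_comm, h]))
    have h₂ : ⁅⁅N, Q⁆, Q⁆ = ⊥ := by rwa [commutator_comm N Q]
    simpa only [hQ.commutator_self] using commutator_commutator_eq_bot_of_rotate h₁ h₂

theorem normalizer_le_normalizer_map_subtype {N : Subgroup G} (K : Subgroup N)
    [K.Characteristic] : normalizer N ≤ normalizer ((K.map N.subtype : Subgroup G) : Set G) := by
  refine le_normalizer_iff.2 fun g hg _ ⟨k, hk, hkx⟩ => ?_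
  have hϕ := characteristic_iff_map_le.1 ‹_› (normalizerMonoidHom N ⟨g, hg⟩)
  exact ⟨_, hϕ (mem_map_of_mem _ hk), by simp [← hkx]⟩

theorem eq_top_of_forall_sylow_le [Finite G] {K : Subgroup G}
    (h : ∀ (p : ℕ) [Fact p.Prime] (P : Sylow p G), (P : Subgroup G) ≤ K) : K = ⊤ := by
  rw [← index_eq_one, Nat.eq_one_iff_not_exists_prime_dvd]
  intro p hp hpK
  have : Fact p.Prime := ⟨hp⟩
  obtain ⟨P⟩ : Nonempty (Sylow p G) := inferInstance
  exact P.not_dvd_index (hpK.trans (index_dvd_of_le (h p P)))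

end Subgroup

theorem exists_ne_one_coprime_orderOf_of_not_isPGroup [Finite G] {H : Subgroup G} {p : ℕ}
    (hp : p.Prime) (hH : ¬IsPGroup p H) : ∃ a ∈ H, a ≠ 1 ∧ p.Coprime (orderOf a) := by
  simp only [IsPGroup, not_forall, not_exists] at hH
  obtain ⟨g, hg⟩ := hH
  set n := orderOf (g : G)
  have hn : n ≠ 0 := (orderOf_pos _).ne'
  refine ⟨g ^ p ^ n.factorization p, pow_mem g.2 _, fun h => hg _ (Subtype.ext h), ?_⟩
  rw [orderOf_pow_of_dvd (pow_ne_zero _ hp.ne_zero) (Nat.ordProj_dvd n p)]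
  exact Nat.coprime_ordCompl hp hn

section Components

open Function
open scoped commutatorElement

variable {ι : Type*} {S : ι → Subgroup G} {i : ι}

theorem exists_ne_conj_mem_of_not_mem_normalizer
    (hperm : ∀ (g : G) (i : ι), ∃ j, conjSubgroup g (S i) = S j) {x a : G}
    (hx : x ∉ normalizer (S i : Set G)) (ha : a ∈ S i) : ∃ j ≠ i, x * a * x⁻¹ ∈ S j := by
  obtain ⟨j, hj⟩ := hperm x i
  refine ⟨j, fun hji => hx ?_, hj ▸ mem_map_of_mem _ ha⟩
  rw [mem_normalizer_iff_map_conj_eq]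
  exact hji ▸ hj

theorem mem_normalizer_of_commute (hdisj : Pairwise (Disjoint on S))
    (hperm : ∀ (g : G) (i : ι), ∃ j, conjSubgroup g (S i) = S j) {x a : G} (ha : a ∈ S i)
    (ha1 : a ≠ 1) (hxa : Commute x a) : x ∈ normalizer (S i : Set G) := by
  by_contra hx
  obtain ⟨j, hji, hj⟩ := exists_ne_conj_mem_of_not_mem_normalizer hperm hx ha
  rw [hxa.eq, mul_inv_cancel_right] at hj
  exact ha1 (disjoint_def.1 (hdisj hji.symm) ha hj)

theorem iSup_le_normalizer (hcomm : ∀ i j, i ≠ j → ∀ x ∈ S i, ∀ y ∈ S j, x * y = y * x)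
    (i : ι) : ⨆ j, S j ≤ normalizer (S i : Set G) :=
  iSup_le fun j => by
    rcases eq_or_ne j i with rfl | hji
    · exact le_normalizer
    · exact fun y hy => centralizer_le_normalizer _
        (mem_centralizer_iff.2 fun x hx => hcomm i j hji.symm x hx y hy)

theorem normal_iSup (hperm : ∀ (g : G) (i : ι), ∃ j, conjSubgroup g (S i) = S j) :
    (⨆ j, S j).Normal := by
  refine ⟨fun n hn g => ?_⟩
  have : ⨆ j, S j ≤ (⨆ j, S j).comap (MulAut.conj g).toMonoidHom := iSup_le fun j s hs => by
    obtain ⟨k, hk⟩ := hperm g j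
    exact mem_iSup_of_mem k (hk ▸ mem_map_of_mem _ hs)
  exact this hn

theorem le_normalizer_of_isPGroup (hdisj : Pairwise (Disjoint on S))
    (hcomm : ∀ i j, i ≠ j → ∀ x ∈ S i, ∀ y ∈ S j, x * y = y * x)
    (hperm : ∀ (g : G) (i : ι), ∃ j, conjSubgroup g (S i) = S j) {p : ℕ}
    {P A : Subgroup G} (hP : IsPGroup p P) (hAP : A ≤ normalizer P) {a : G} (ha : a ∈ S i)
    (haA : a ∈ A) (ha1 : a ≠ 1) (hap : p.Coprime (orderOf a)) :
    P ≤ normalizer (S i : Set G) := by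
  intro x hx
  by_contra hxS
  refine hxS (mem_normalizer_of_commute hdisj hperm ha ha1 ?_)
  obtain ⟨j, hji, hj⟩ := exists_ne_conj_mem_of_not_mem_normalizer hperm hxS ha
  have hcP : ⁅x, a⁆ ∈ P := by
    rw [commutatorElement_def, mul_assoc x, mul_assoc x]
    exact mul_mem hx
      (by simpa only [mul_assoc] using le_normalizer_iff.1 hAP a haA _ (inv_mem hx))
  have hc : ⁅x, a⁆ ^ orderOf a = 1 := by
    have hcomm' : Commute (x * a * x⁻¹) a⁻¹ := hcomm j i hji _ hj _ (inv_mem ha)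
    rw [commutatorElement_def, hcomm'.mul_pow, conj_pow, inv_pow, pow_orderOf_eq_one]
    group
  have hord : orderOf ⁅x, a⁆ = 1 := by
    have := (hP.orderOf_coprime hap ⟨_, hcP⟩).eq_one_of_dvd
    rw [orderOf_mk] at this
    exact this (orderOf_dvd_of_pow_eq_one hc)
  exact commutatorElement_eq_one_iff_commute.1 (orderOf_eq_one_iff.1 hord)

theorem le_normalizer_of_isNilpotent [Finite G] (hdisj : Pairwise (Disjoint on S))
    (hcomm : ∀ i j, i ≠ j → ∀ x ∈ S i, ∀ y ∈ S j, x * y = y * x)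
    (hperm : ∀ (g : G) (i : ι), ∃ j, conjSubgroup g (S i) = S j) {N A : Subgroup G}
    [Group.IsNilpotent N] (hAN : A ≤ normalizer N)
    (hA : ∀ p : ℕ, p.Prime → ∃ a ∈ S i ⊓ A, a ≠ 1 ∧ p.Coprime (orderOf a)) :
    N ≤ normalizer (S i : Set G) := by
  suffices (normalizer (S i : Set G)).subgroupOf N = ⊤ from subgroupOf_eq_top.1 this
  refine eq_top_of_forall_sylow_le fun p hp P => map_le_iff_le_comap.1 ?_
  have := P.characteristic_of_normal inferInstance
  obtain ⟨a, ⟨ha, haA⟩, ha1, hap⟩ := hA p hp.out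
  exact le_normalizer_of_isPGroup hdisj hcomm hperm (P.isPGroup'.map N.subtype)
    (hAN.trans (normalizer_le_normalizer_map_subtype _)) ha haA ha1 hap

theorem map_le_normalizer_of_isQuasisimple (hdisj : Pairwise (Disjoint on S))
    (hcomm : ∀ i j, i ≠ j → ∀ x ∈ S i, ∀ y ∈ S j, x * y = y * x)
    (hperm : ∀ (g : G) (i : ι), ∃ j, conjSubgroup g (S i) = S j) {A : Subgroup G}
    {Q : Subgroup A} (hQ : IsQuasisimple Q) (hQA : Q.IsSubnormal') {a : G} (ha : a ∈ S i)
    (haA : a ∈ A) (ha1 : a ≠ 1) : Q.map A.subtype ≤ normalizer (S i : Set G) := by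
  have hT : ((⨆ j, S j).comap A.subtype).Normal := (normal_iSup hperm).comap A.subtype
  rcases hQA.isSubnormalIn_top.le_or_commutator_eq_bot hQ le_top (normalizer_eq_top_iff.2 hT).ge
    with h | h
  · exact map_le_iff_le_comap.2 (h.trans (comap_mono (iSup_le_normalizer hcomm i)))
  · rintro _ ⟨x, hx, rfl⟩
    have hax := mem_centralizer_iff.1 (commutator_eq_bot_iff_le_centralizer.1 h hx) ⟨a, haA⟩
      (mem_comap.2 (mem_iSup_of_mem i ha))
    exact mem_normalizer_of_commute hdisj hperm ha ha1 (congrArg Subtype.val hax).symm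

theorem map_generalizedFitting_le_normalizer [Finite G] (hdisj : Pairwise (Disjoint on S))
    (hcomm : ∀ i j, i ≠ j → ∀ x ∈ S i, ∀ y ∈ S j, x * y = y * x)
    (hperm : ∀ (g : G) (i : ι), ∃ j, conjSubgroup g (S i) = S j) {A : Subgroup G}
    (hA : ¬∃ p : ℕ, p.Prime ∧ IsPGroup p (S i ⊓ A : Subgroup G)) :
    (generalizedFitting A).map A.subtype ≤ normalizer (S i : Set G) := by
  simp only [not_exists, not_and] at hA
  have hA' p (hp : p.Prime) := exists_ne_one_coprime_orderOf_of_not_isPGroup hp (hA p hp)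
  obtain ⟨a, ⟨ha, haA⟩, ha1, -⟩ := hA' 2 Nat.prime_two
  rw [map_le_iff_le_comap]
  refine sup_le (sSup_le ?_) (sSup_le ?_)
  · rintro N ⟨hN, hNil⟩
    have : Group.IsNilpotent (N.map A.subtype) :=
      Group.nilpotent_of_mulEquiv (N.equivMapOfInjective _ A.subtype_injective)
    refine map_le_iff_le_comap.1 (le_normalizer_of_isNilpotent hdisj hcomm hperm ?_ hA')
    rw [← normal_subgroupOf_iff_le_normalizer (map_subtype_le N), subgroupOf,
      comap_map_eq_self_of_injective A.subtype_injective]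
    exact hN
  · rintro Q ⟨hQA, hQ⟩
    exact map_le_iff_le_comap.1
      (map_le_normalizer_of_isQuasisimple hdisj hcomm hperm hQ hQA ha haA ha1)

end Components

end

theorem normalized_by_generalizedFitting_of_not_isPGroup_general
{G : Type*} [Group G] [Finite G] (A B : Subgroup G)
    (m : ℕ) (S : Fin m → Subgroup G)
    (hindep : iSupIndep S)
    (hcomm : ∀ i j, i ≠ j → ∀ x ∈ S i, ∀ y ∈ S j, x * y = y * x)
    (hperm : ∀ (g : G) (i : Fin m), ∃ j, conjSubgroup g (S i) = S j) :
    ∀ i : Fin m,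
      ((¬ ∃ p : ℕ, p.Prime ∧ IsPGroup p (S i ⊓ A : Subgroup G)) →
        Subgroup.map A.subtype (generalizedFitting A) ≤ Subgroup.normalizer (S i : Set G)) ∧
      ((¬ ∃ p : ℕ, p.Prime ∧ IsPGroup p (S i ⊓ B : Subgroup G)) →
        Subgroup.map B.subtype (generalizedFitting B) ≤ Subgroup.normalizer (S i : Set G)) :=
  fun _ => ⟨map_generalizedFitting_le_normalizer hindep.pairwiseDisjoint hcomm hperm,
    map_generalizedFitting_le_normalizer hindep.pairwiseDisjoint hcomm hperm⟩

/-- **Lemma 3.3.** In a coprimely factorized finite group `G = AB` with trivial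
soluble radical and `F*(G) = S 1 × ⋯ × S m` a direct product of nonabelian
simple subgroups permuted by `G`: if `S i ⊓ A` is not a `p`-group for any
prime `p`, then `S i` is normalized by `F*(A)`; similarly for `B`. -/
theorem normalized_by_generalizedFitting_of_not_isPGroup
{G : Type*} [Group G] [Finite G] (A B : Subgroup G)
    (hfact : ∀ g : G, ∃ a ∈ A, ∃ b ∈ B, g = a * b)
    (hcop : Nat.Coprime (Nat.card A) (Nat.card B))
    (hrad : solubleRadical G = ⊥)
    (m : ℕ) (S : Fin m → Subgroup G)
    (hsimple : ∀ i, IsSimpleGroup (S i))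
    (hna : ∀ i, ∃ a b : S i, a * b ≠ b * a)
    (hindep : iSupIndep S)
    (hsup : ⨆ i, S i = generalizedFitting G)
    (hcomm : ∀ i j, i ≠ j → ∀ x ∈ S i, ∀ y ∈ S j, x * y = y * x)
    (hperm : ∀ (g : G) (i : Fin m), ∃ j, conjSubgroup g (S i) = S j) :
    ∀ i : Fin m,
      ((¬ ∃ p : ℕ, p.Prime ∧ IsPGroup p (S i ⊓ A : Subgroup G)) →
        Subgroup.map A.subtype (generalizedFitting A) ≤ Subgroup.normalizer (S i : Set G)) ∧
      ((¬ ∃ p : ℕ, p.Prime ∧ IsPGroup p (S i ⊓ B : Subgroup G)) →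
        Subgroup.map B.subtype (generalizedFitting B) ≤ Subgroup.normalizer (S i : Set G)) :=
  normalized_by_generalizedFitting_of_not_isPGroup_general A B m S hindep hcomm hperm
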